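/- Let x_1, x_2 ∈ R^{1,3} be spacelike separated points, i.e. η_{ab}(x_1−x_2)^a(x_1−x_2)^b < 0. Then there exist non-parallel future-pointing unit timelike vectors t_1, t_2, each orthogonal to x_1 − x_2, such that the squared empirical distance −Π_{ab}(x_1−x_2)^a(x_1−x_2)^b between the lines γ_i(u) = u t_i + x_i equals −η_{ab}(x_1−x_2)^a(x_1−x_2)^b, where Π is the orthogonal projection onto the complement of span{t_1,t_2}. -/

import Mathlib

open scoped BigOperators

/-- The Minkowski metric η = diag(1,-1,-1,-1) on ℝ^{1,3}. -/
noncomputable def mink (a b : Fin 4) : ℝ :=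
  if a = b then (if a = (0 : Fin 4) then 1 else -1) else 0

/-- The volume 4-form ε_{abcd} (Levi-Civita symbol) on ℝ^{1,3}. -/
noncomputable def eps (a b c d : Fin 4) : ℝ :=
  ∑ σ : Equiv.Perm (Fin 4),
    if (σ 0, σ 1, σ 2, σ 3) = (a, b, c, d) then ((Equiv.Perm.sign σ : ℤ) : ℝ) else 0

/-- Lowering (equivalently, raising) an index with η. -/
noncomputable def low (p : Fin 4 → ℝ) (a : Fin 4) : ℝ := ∑ b, mink a b * p b

/-- The Minkowski inner product η_{ab} p^a q^b. -/
noncomputable def mdot (p q : Fin 4 → ℝ) : ℝ := ∑ a, ∑ b, mink a b * p a * q b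

/-- The Pauli–Lubanski vector S_a := (1/2) ε_{abcd} J^{bc} p^d (lower index). -/
noncomputable def PL (J : Fin 4 → Fin 4 → ℝ) (p : Fin 4 → ℝ) (a : Fin 4) : ℝ :=
  (1/2) * ∑ b, ∑ c, ∑ d, eps a b c d * J b c * p d

/-- The centre-of-mass vector M_a := J_{ab} p^b (lower index). -/
noncomputable def Mvec (J : Fin 4 → Fin 4 → ℝ) (p : Fin 4 → ℝ) (a : Fin 4) : ℝ :=
  ∑ c, ∑ d, mink a c * J c d * low p d

/-- ε with first index raised: ε^a{}_{bcd}. -/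
noncomputable def epsU (a b c d : Fin 4) : ℝ := ∑ e, mink a e * eps e b c d

/-- The projection Π^a_b onto the spacelike 2-plane orthogonal to p₁ and p₂:
Π^a_b = δ^a_b + (P⁴₁₂ − μ₁²μ₂²)⁻¹ (μ₂² p₁^a p₁_b + μ₁² p₂^a p₂_b − P²₁₂(p₁^a p₂_b + p₂^a p₁_b)). -/
noncomputable def Proj (p1 p2 : Fin 4 → ℝ) (a b : Fin 4) : ℝ :=
  (if a = b then (1:ℝ) else 0) +
    (1 / ((mdot p1 p2)^2 - mdot p1 p1 * mdot p2 p2)) *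
      (mdot p2 p2 * p1 a * low p1 b + mdot p1 p1 * p2 a * low p2 b
        - mdot p1 p2 * (p1 a * low p2 b + p2 a * low p1 b))

/-!
If `d` is orthogonal to `t₁` and `t₂`, then `Π d = d`, so the empirical distance of the two lines
is just `-η(d, d)`; it remains to find the directions. For spacelike `d`, the orthogonal complement
of `d` is a Lorentzian 3-space: the projection of the time axis onto it, normalized, gives a future
unit timelike `t₁`, and tilting it by a purely spatial unit vector `w ⊥ d` gives the second
direction `t₂ = √2 t₁ + w`, a future unit vector because `η(w, w) = -1` and `w ⊥ t₁`.
-/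

lemma mdot_eq (p q : Fin 4 → ℝ) :
    mdot p q = p 0 * q 0 - p 1 * q 1 - p 2 * q 2 - p 3 * q 3 := by
  simp [mdot, mink, Fin.sum_univ_four]
  ring

lemma mdot_comm (p q : Fin 4 → ℝ) : mdot p q = mdot q p := by
  simp only [mdot_eq]
  ring

lemma mdot_add_left (p q r : Fin 4 → ℝ) : mdot (p + q) r = mdot p r + mdot q r := by
  simp only [mdot_eq, Pi.add_apply]
  ring

lemma mdot_add_right (p q r : Fin 4 → ℝ) : mdot p (q + r) = mdot p q + mdot p r := by
  rw [mdot_comm, mdot_add_left, mdot_comm q, mdot_comm r]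

lemma mdot_sub_left (p q r : Fin 4 → ℝ) : mdot (p - q) r = mdot p r - mdot q r := by
  simp only [mdot_eq, Pi.sub_apply]
  ring

lemma mdot_smul_left (c : ℝ) (p q : Fin 4 → ℝ) : mdot (c • p) q = c * mdot p q := by
  simp only [mdot_eq, Pi.smul_apply, smul_eq_mul]
  ring

lemma mdot_smul_right (c : ℝ) (p q : Fin 4 → ℝ) : mdot p (c • q) = c * mdot p q := by
  rw [mdot_comm, mdot_smul_left, mdot_comm]

lemma mdot_single_zero_left (p : Fin 4 → ℝ) : mdot (Pi.single 0 1) p = p 0 := by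
  simp [mdot_eq]

lemma sum_low_mul (p q : Fin 4 → ℝ) : ∑ b, low p b * q b = mdot p q := by
  simp [low, mink, Fin.sum_univ_four, mdot_eq]
  ring

lemma sum_Proj_mul_of_mdot_eq_zero {t1 t2 d : Fin 4 → ℝ} (h1 : mdot t1 d = 0)
    (h2 : mdot t2 d = 0) (e : Fin 4) : ∑ b, Proj t1 t2 e b * d b = d e := by
  simp only [Proj, add_mul, Finset.sum_add_distrib, ite_mul, one_mul, zero_mul,
    Finset.sum_ite_eq, Finset.mem_univ, if_true]
  have hzero : ∑ b, (1 / (mdot t1 t2 ^ 2 - mdot t1 t1 * mdot t2 t2) *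
      (mdot t2 t2 * t1 e * low t1 b + mdot t1 t1 * t2 e * low t2 b -
        mdot t1 t2 * (t1 e * low t2 b + t2 e * low t1 b))) * d b = 0 := by
    have hl1 : ∑ b, low t1 b * d b = 0 := (sum_low_mul t1 d).trans h1
    have hl2 : ∑ b, low t2 b * d b = 0 := (sum_low_mul t2 d).trans h2
    simp only [Fin.sum_univ_four] at hl1 hl2 ⊢
    linear_combination (1 / (mdot t1 t2 ^ 2 - mdot t1 t1 * mdot t2 t2)) *
      ((mdot t2 t2 * t1 e - mdot t1 t2 * t2 e) * hl1 +
        (mdot t1 t1 * t2 e - mdot t1 t2 * t1 e) * hl2)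
  rw [hzero, add_zero]

lemma sum_mink_mul_mul_eq_mdot_of_fixed {P : Fin 4 → Fin 4 → ℝ} {d : Fin 4 → ℝ}
    (hP : ∀ e, ∑ b, P e b * d b = d e) :
    ∑ a, ∑ b, (∑ c, mink a c * P c b) * d a * d b = mdot d d := by
  calc ∑ a, ∑ b, (∑ c, mink a c * P c b) * d a * d b
      = ∑ a, ∑ c, mink a c * d a * ∑ b, P c b * d b := by
        simp only [Finset.sum_mul, Finset.mul_sum]
        refine Finset.sum_congr rfl fun a _ => ?_
        rw [Finset.sum_comm]
        refine Finset.sum_congr rfl fun c _ => Finset.sum_congr rfl fun b _ => ?_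
        ring
    _ = mdot d d := by simp only [hP, mdot]

lemma exists_spatial_unit_mdot_eq_zero (d : Fin 4 → ℝ) :
    ∃ w : Fin 4 → ℝ, w 0 = 0 ∧ mdot w w = -1 ∧ mdot w d = 0 := by
  by_cases hd : d 1 = 0 ∧ d 2 = 0
  · refine ⟨![0, 1, 0, 0], rfl, ?_, ?_⟩ <;> simp [mdot_eq, hd.1]
  · have hpos : 0 < d 1 ^ 2 + d 2 ^ 2 := by
      rcases not_and_or.1 hd with h | h <;> positivity
    set n := √(d 1 ^ 2 + d 2 ^ 2)
    have hn : n ^ 2 = d 1 ^ 2 + d 2 ^ 2 := Real.sq_sqrt hpos.le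
    have hn0 : n ≠ 0 := (Real.sqrt_pos.2 hpos).ne'
    refine ⟨![0, -d 2 / n, d 1 / n, 0], rfl, ?_, ?_⟩ <;>
      simp only [mdot_eq, Matrix.cons_val_zero, Matrix.cons_val_one, Matrix.cons_val, mul_zero,
        zero_mul, zero_sub, sub_zero]
    · field_simp
      linear_combination hn
    · ring

lemma exists_future_unit_mdot_eq_zero {d : Fin 4 → ℝ} (hd : mdot d d < 0) :
    ∃ t : Fin 4 → ℝ, mdot t t = 1 ∧ 0 < t 0 ∧ mdot t d = 0 ∧
      ∀ w : Fin 4 → ℝ, w 0 = 0 → mdot w d = 0 → mdot t w = 0 := by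
  set u : Fin 4 → ℝ := Pi.single 0 1 - (d 0 / mdot d d) • d
  have hud : mdot u d = 0 := by
    rw [mdot_sub_left, mdot_smul_left, mdot_single_zero_left, div_mul_cancel₀ _ hd.ne, sub_self]
  have huw : ∀ w : Fin 4 → ℝ, w 0 = 0 → mdot w d = 0 → mdot u w = 0 := fun w hw0 hwd => by
    rw [mdot_sub_left, mdot_smul_left, mdot_single_zero_left, mdot_comm d w, hwd, hw0]
    ring
  have hu0 : 0 < u 0 := by
    have : d 0 / mdot d d * d 0 ≤ 0 := by
      rw [div_mul_eq_mul_div]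
      exact div_nonpos_of_nonneg_of_nonpos (mul_self_nonneg _) hd.le
    simp only [u, Pi.sub_apply, Pi.smul_apply, smul_eq_mul, Pi.single_eq_same]
    linarith
  have huu : mdot u u = u 0 := by
    rw [mdot_sub_left, mdot_smul_left, mdot_single_zero_left, mdot_comm d u, hud, mul_zero,
      sub_zero]
  refine ⟨(√(u 0))⁻¹ • u, ?_, ?_, ?_, fun w hw0 hwd => ?_⟩
  · rw [mdot_smul_left, mdot_smul_right, huu, ← mul_assoc, ← mul_inv, Real.mul_self_sqrt hu0.le,
      inv_mul_cancel₀ hu0.ne']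
  · simp only [Pi.smul_apply, smul_eq_mul]
    positivity
  · rw [mdot_smul_left, hud, mul_zero]
  · rw [mdot_smul_left, huw w hw0 hwd, mul_zero]

lemma mdot_sqrt_two_smul_add_self {t w : Fin 4 → ℝ} (ht : mdot t t = 1) (hw : mdot w w = -1)
    (htw : mdot t w = 0) : mdot (√2 • t + w) (√2 • t + w) = 1 := by
  have h2 : √2 * √2 = 2 := Real.mul_self_sqrt zero_le_two
  simp only [mdot_add_left, mdot_add_right, mdot_smul_left, mdot_smul_right, mdot_comm w t, ht,
    hw, htw]
  linear_combination h2

lemma not_parallel_smul_add_of_mdot_self {t w : Fin 4 → ℝ} (ht : mdot t t = 1) (hw : mdot w w = -1)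
    (k : ℝ) : ¬ ∃ c : ℝ, ∀ a, (k • t + w) a = c * t a := by
  rintro ⟨c, hc⟩
  have hwt : w = (c - k) • t := funext fun a => by
    have := hc a
    simp only [Pi.add_apply, Pi.smul_apply, smul_eq_mul] at this ⊢
    linarith
  rw [hwt, mdot_smul_left, mdot_smul_right, ht] at hw
  nlinarith [sq_nonneg (c - k)]

lemma exists_nonparallel_future_units_mdot_eq_zero {d : Fin 4 → ℝ} (hd : mdot d d < 0) :
    ∃ t1 t2 : Fin 4 → ℝ,
      mdot t1 t1 = 1 ∧ 0 < t1 0 ∧ mdot t2 t2 = 1 ∧ 0 < t2 0 ∧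
      (¬ ∃ c : ℝ, ∀ a, t2 a = c * t1 a) ∧ mdot t1 d = 0 ∧ mdot t2 d = 0 := by
  obtain ⟨w, hw0, hww, hwd⟩ := exists_spatial_unit_mdot_eq_zero d
  obtain ⟨t, htt, ht0, htd, htw⟩ := exists_future_unit_mdot_eq_zero hd
  refine ⟨t, √2 • t + w, htt, ht0, mdot_sqrt_two_smul_add_self htt hww (htw w hw0 hwd), ?_,
    not_parallel_smul_add_of_mdot_self htt hww _, htd, ?_⟩
  · simp only [Pi.add_apply, Pi.smul_apply, smul_eq_mul, hw0, add_zero]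
    positivity
  · rw [mdot_add_left, mdot_smul_left, htd, hwd]
    ring

/-- For spacelike separated points x₁, x₂ there are non-parallel future-pointing unit
timelike directions, orthogonal to x₁ − x₂, such that the empirical distance between the
corresponding lines through x₁ and x₂ realizes the Lorentzian distance of the points. -/
theorem stmt_15 (x1 x2 : Fin 4 → ℝ)
    (hsp : mdot (fun a => x1 a - x2 a) (fun a => x1 a - x2 a) < 0) :
    ∃ t1 t2 : Fin 4 → ℝ,
      mdot t1 t1 = 1 ∧ t1 0 > 0 ∧ mdot t2 t2 = 1 ∧ t2 0 > 0 ∧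
      (¬ ∃ c : ℝ, ∀ a, t2 a = c * t1 a) ∧
      mdot t1 (fun a => x1 a - x2 a) = 0 ∧ mdot t2 (fun a => x1 a - x2 a) = 0 ∧
      -(∑ a, ∑ b, (∑ c, mink a c * Proj t1 t2 c b) *
          (x1 a - x2 a) * (x1 b - x2 b))
        = -(mdot (fun a => x1 a - x2 a) (fun a => x1 a - x2 a)) := by
  obtain ⟨t1, t2, h1, h10, h2, h20, hpar, h1d, h2d⟩ :=
    exists_nonparallel_future_units_mdot_eq_zero hsp
  refine ⟨t1, t2, h1, h10, h2, h20, hpar, h1d, h2d, ?_⟩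
  rw [sum_mink_mul_mul_eq_mdot_of_fixed (sum_Proj_mul_of_mdot_eq_zero h1d h2d)]
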